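/- arXiv:0908.3788 — 4 statements merged into one kernel-verified Lean document; each statement's English description precedes it below -/
import Mathlib

section
/- Let n ≥ 1, let a : {1,…,n}³ → ℝ be symmetric under all permutations of its three indices, and let λ ∈ ℝⁿ with Σᵢ λᵢ² = 1. Then Σₖ (Σᵢ a_{iik} λᵢ)² ≤ Σ_{i,k} (a_{iik})² ≤ Σ_{i,j,k} (a_{ijk})², and moreover (1 + 2/(n+1)) · Σₖ (Σᵢ a_{iik} λᵢ)² ≤ Σ_{i,j,k} (a_{ijk})² + (2n/(n+1)) · Σₖ (Σᵢ a_{iik})². -/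
/-!
Write `P = ∑_{i,k} a_{iik}²`, `D = ∑_k a_{kkk}²`, `T = ∑_{i,j,k} a_{ijk}²` and `H_k = ∑_i a_{iik}`.
Cauchy–Schwarz against the unit vector `λ` bounds the left-hand side by `P`. Every triple with
two equal indices is one of `(i,i,k)`, `(i,k,k)`, `(i,k,i)`, the three families overlapping only on
the diagonal, so by symmetry `3P ≤ T + 2D`. Cauchy–Schwarz applied to
`a_{kkk} = H_k - ∑_{i ≠ k} a_{iik}` gives `(n+1) D ≤ n (∑_k H_k² + P)`. Eliminating `D` yields
`(n+3) P ≤ (n+1) T + 2n ∑_k H_k²`.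
-/

open Finset

section
variable {ι : Type*} [Fintype ι]

theorem sum_sq_sum_mul_le_sum_sum_sq {κ : Type*} [Fintype κ] (b : ι → κ → ℝ) (v : ι → ℝ)
    (hv : ∑ i, v i ^ 2 ≤ 1) :
    ∑ k, (∑ i, b i k * v i) ^ 2 ≤ ∑ i, ∑ k, b i k ^ 2 := by
  rw [sum_comm]
  gcongr with k
  calc (∑ i, b i k * v i) ^ 2 ≤ (∑ i, b i k ^ 2) * ∑ i, v i ^ 2 :=
        sum_mul_sq_le_sq_mul_sq _ _ _
    _ ≤ ∑ i, b i k ^ 2 := mul_le_of_le_one_right (by positivity) hv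

theorem sum_sum_sq_diag_le_sum_sq (a : ι → ι → ι → ℝ) :
    ∑ i, ∑ k, a i i k ^ 2 ≤ ∑ i, ∑ j, ∑ k, a i j k ^ 2 := by
  refine sum_le_sum fun i _ => ?_
  exact single_le_sum (f := fun j => ∑ k, a i j k ^ 2) (fun _ _ => by positivity) (mem_univ i)

variable [DecidableEq ι]

theorem card_add_one_mul_sq_le (x : ι → ℝ) (k : ι) :
    (Fintype.card ι + 1) * x k ^ 2 ≤ Fintype.card ι * ((∑ i, x i) ^ 2 + ∑ i, x i ^ 2) := by
  set g := Function.update (-x) k (∑ i, x i)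
  have hsum : ∑ i, g i = x k := by
    simp [g, sum_update_of_mem, sum_neg_distrib]
  have hsq : ∑ i, g i ^ 2 = (∑ i, x i) ^ 2 + (∑ i, x i ^ 2 - x k ^ 2) := by
    have : (fun i => g i ^ 2) = Function.update (fun i => x i ^ 2) k ((∑ i, x i) ^ 2) := by
      ext i
      rcases eq_or_ne i k with rfl | h <;> simp [g, *]
    simp [this, sum_update_of_mem]
  have := sq_sum_le_card_mul_sum_sq (s := univ) (f := g)
  rw [hsum, hsq, card_univ] at this
  nlinarith

theorem sum_diagonal_faces_le (f : ι → ι → ι → ℝ) (hf : ∀ i j k, 0 ≤ f i j k) :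
    ∑ i, ∑ k, f i i k + ∑ i, ∑ j, f i j j + ∑ i, ∑ j, f i j i
      ≤ ∑ i, ∑ j, ∑ k, f i j k + 2 * ∑ i, f i i i := by
  have hweight : ∀ i j k, (if i = j then f i j k else 0) + (if j = k then f i j k else 0)
      + (if i = k then f i j k else 0) ≤ f i j k + 2 * (if i = j ∧ j = k then f i j k else 0) := by
    intro i j k
    -- the weight on the left is `1` on triples with exactly two equal indices, `3` on the diagonal
    grind [hf i j k]
  have := sum_le_sum fun i (_ : i ∈ univ) => sum_le_sum fun j (_ : j ∈ univ) =>
    sum_le_sum fun k (_ : k ∈ univ) => hweight i j k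
  simpa [sum_add_distrib, ← mul_sum, sum_ite_irrel, ite_and] using this

theorem three_mul_sum_sum_sq_diag_le (a : ι → ι → ι → ℝ)
    (h₁ : ∀ i j k, a i j k = a j i k) (h₂ : ∀ i j k, a i j k = a i k j) :
    3 * ∑ i, ∑ k, a i i k ^ 2 ≤ ∑ i, ∑ j, ∑ k, a i j k ^ 2 + 2 * ∑ i, a i i i ^ 2 := by
  have hfaces := sum_diagonal_faces_le (fun i j k => a i j k ^ 2) (fun _ _ _ => sq_nonneg _)
  have e₁ : ∑ i, ∑ j, a i j j ^ 2 = ∑ i, ∑ k, a i i k ^ 2 := by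
    rw [sum_comm]
    exact sum_congr rfl fun i _ => sum_congr rfl fun k _ => by rw [h₁ k i i, h₂ i k i]
  have e₂ : ∑ i, ∑ j, a i j i ^ 2 = ∑ i, ∑ k, a i i k ^ 2 := by
    exact sum_congr rfl fun i _ => sum_congr rfl fun j _ => by rw [h₂ i j i]
  simp only [e₁, e₂] at hfaces
  linarith

theorem card_add_one_mul_sum_sq_diag_le (a : ι → ι → ι → ℝ) :
    (Fintype.card ι + 1) * ∑ k, a k k k ^ 2
      ≤ Fintype.card ι * (∑ k, (∑ i, a i i k) ^ 2 + ∑ i, ∑ k, a i i k ^ 2) := by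
  rw [mul_sum, sum_comm (f := fun i k => a i i k ^ 2), ← sum_add_distrib, mul_sum]
  exact sum_le_sum fun k _ => card_add_one_mul_sq_le (fun i => a i i k) k

end

theorem stmt0_general (n : ℕ) (a : Fin n → Fin n → Fin n → ℝ)
    (hsymm1 : ∀ i j k, a i j k = a j i k)
    (hsymm2 : ∀ i j k, a i j k = a i k j)
    (lam : Fin n → ℝ) (hlam : ∑ i, (lam i) ^ 2 = 1) :
    ((∑ k, (∑ i, a i i k * lam i) ^ 2) ≤ ∑ i, ∑ k, (a i i k) ^ 2) ∧
    ((∑ i, ∑ k, (a i i k) ^ 2) ≤ ∑ i, ∑ j, ∑ k, (a i j k) ^ 2) ∧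
    ((1 + 2 / ((n : ℝ) + 1)) * ∑ k, (∑ i, a i i k * lam i) ^ 2
      ≤ (∑ i, ∑ j, ∑ k, (a i j k) ^ 2)
        + (2 * (n : ℝ) / ((n : ℝ) + 1)) * ∑ k, (∑ i, a i i k) ^ 2) := by
  have hS := sum_sq_sum_mul_le_sum_sum_sq (fun i k => a i i k) lam hlam.le
  refine ⟨hS, sum_sum_sq_diag_le_sum_sq a, ?_⟩
  have hT := three_mul_sum_sum_sq_diag_le a hsymm1 hsymm2
  have hD := card_add_one_mul_sum_sq_diag_le a
  rw [Fintype.card_fin] at hD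
  have key : ((n : ℝ) + 3) * ∑ k, (∑ i, a i i k * lam i) ^ 2
      ≤ (n + 1) * ∑ i, ∑ j, ∑ k, a i j k ^ 2 + 2 * n * ∑ k, (∑ i, a i i k) ^ 2 := by
    linarith [mul_le_mul_of_nonneg_left hS (by positivity : (0 : ℝ) ≤ n + 3),
      mul_le_mul_of_nonneg_left hT (by positivity : (0 : ℝ) ≤ n + 1)]
  field_simp
  linarith

/-- Pointwise algebraic content of the lemma bounding `|∇|A||` by `|∇A|`:
for a fully symmetric three-index array `a` and a unit vector `lam`,
`∑ₖ (∑ᵢ a_{iik} λᵢ)² ≤ ∑_{i,k} a_{iik}² ≤ ∑_{i,j,k} a_{ijk}²`, and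
`(1 + 2/(n+1)) ∑ₖ (∑ᵢ a_{iik} λᵢ)² ≤ ∑_{i,j,k} a_{ijk}² + (2n/(n+1)) ∑ₖ (∑ᵢ a_{iik})²`. -/
theorem stmt0 (n : ℕ) (hn : 1 ≤ n) (a : Fin n → Fin n → Fin n → ℝ)
    (hsymm1 : ∀ i j k, a i j k = a j i k)
    (hsymm2 : ∀ i j k, a i j k = a i k j)
    (lam : Fin n → ℝ) (hlam : ∑ i, (lam i) ^ 2 = 1) :
    ((∑ k, (∑ i, a i i k * lam i) ^ 2) ≤ ∑ i, ∑ k, (a i i k) ^ 2) ∧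
    ((∑ i, ∑ k, (a i i k) ^ 2) ≤ ∑ i, ∑ j, ∑ k, (a i j k) ^ 2) ∧
    ((1 + 2 / ((n : ℝ) + 1)) * ∑ k, (∑ i, a i i k * lam i) ^ 2
      ≤ (∑ i, ∑ j, ∑ k, (a i j k) ^ 2)
        + (2 * (n : ℝ) / ((n : ℝ) + 1)) * ∑ k, (∑ i, a i i k) ^ 2) :=
  stmt0_general n a hsymm1 hsymm2 lam hlam
end

section
/- Let γ : ℝ → ℝ² be a smooth closed unit-speed curve with period ℓ, let f : ℝ → ℝ be smooth and ℓ-periodic, and let x : (−ε,ε) → ℝ² and τ : (−ε,ε) → (0,∞) be differentiable with x(0) = x₀, τ(0) = t₀, x′(0) = y, τ′(0) = h. For s ∈ (−ε,ε) define γ_s(t) = γ(t) + s·f(t)·n(t) and Φ(s) = (4πτ(s))^{−1/2} ∫₀^ℓ e^{−|γ_s(t) − x(s)|²/(4τ(s))} |γ_s′(t)| dt. Then Φ is differentiable at s = 0 and Φ′(0) = (4πt₀)^{−1/2} ∫₀^ℓ [ f(t)·( H(t) − ⟨γ(t) − x₀, n(t)⟩/(2t₀) ) + h·( |γ(t) −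 x₀|²/(4t₀²) − 1/(2t₀) ) + ⟨γ(t) − x₀, y⟩/(2t₀) ] e^{−|γ(t) − x₀|²/(4t₀)} dt. -/
/-!
The variation factors as `s ↦ Ψ (s, x s, τ s)` with
`Ψ (s, a, r) = ∫₀^ℓ G_r (γ + s f n - a) ‖γ' + s (f n)'‖`, where `G_r z = (4πr)^{-1/2} e^{-‖z‖²/4r}`.
Since `x` and `τ` are only differentiable at `0`, the chain rule needs `Ψ` to be Fréchet
differentiable at `(0, x₀, t₀)`; this holds because the integrand is `C¹` on an open set
containing `{(0, x₀, t₀)} × [0, ℓ]`, so the derivative may be taken under the integral sign, and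
its value in the direction `(1, y, h)` is computed along the line through `(0, x₀, t₀)`. The
curvature enters through `⟪γ', (f n)'⟫ = f H`, which follows from `⟪γ', n⟫ = 0` and
`⟪γ', n'⟫ = -⟪γ'', n⟫`.
-/

noncomputable section
open Real MeasureTheory
open scoped RealInnerProductSpace

abbrev E2 := EuclideanSpace ℝ (Fin 2)

/-- The unit normal of a unit-speed plane curve: `γ′` rotated by `−π/2`. -/
def normal (γ : ℝ → E2) (t : ℝ) : E2 := WithLp.toLp 2 ![deriv γ t 1, -(deriv γ t 0)]

/-- The curvature `H = −⟨γ″, n⟩` of a unit-speed plane curve. -/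
def curv (γ : ℝ → E2) (t : ℝ) : ℝ := -⟪deriv (deriv γ) t, normal γ t⟫

section ParametricIntegral

variable {P E : Type*} [NormedAddCommGroup P] [NormedSpace ℝ P]
  [NormedAddCommGroup E] [NormedSpace ℝ E] {F : P × ℝ → E} {W : Set (P × ℝ)} {a b : ℝ}

theorem ContDiffOn.continuousOn_fderiv_comp_inl (hW : IsOpen W) (hF : ContDiffOn ℝ 1 F W)
    {p₀ : P} {s : Set ℝ} (hp₀ : ∀ t ∈ s, (p₀, t) ∈ W) :
    ContinuousOn (fun t => (fderiv ℝ F (p₀, t)).comp (ContinuousLinearMap.inl ℝ P ℝ)) s :=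
  ((hF.continuousOn_fderiv_of_isOpen hW le_rfl).comp
    (continuous_const.prodMk continuous_id).continuousOn hp₀).clm_comp continuousOn_const

theorem hasFDerivAt_intervalIntegral_of_contDiffOn [ProperSpace P] (hW : IsOpen W)
    (hF : ContDiffOn ℝ 1 F W) {p₀ : P} (hp₀ : ∀ t ∈ Set.uIcc a b, (p₀, t) ∈ W) :
    HasFDerivAt (fun p => ∫ t in a..b, F (p, t))
      (∫ t in a..b, (fderiv ℝ F (p₀, t)).comp (ContinuousLinearMap.inl ℝ P ℝ)) p₀ := by
  -- On a compact tube `closedBall p₀ δ ×ˢ [a, b] ⊆ W` the bound on `fderiv F` dominates.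
  obtain ⟨U, V, hU, -, hp₀U, hV, hUV⟩ := generalized_tube_lemma isCompact_singleton
    isCompact_uIcc hW (by rintro ⟨p, t⟩ ⟨rfl, ht⟩; exact hp₀ t ht)
  obtain ⟨δ, hδ, hδU⟩ := Metric.nhds_basis_closedBall.mem_iff.mp
    (hU.mem_nhds (hp₀U rfl))
  have hK : Metric.closedBall p₀ δ ×ˢ Set.uIcc a b ⊆ W :=
    (Set.prod_mono hδU hV).trans hUV
  obtain ⟨M, hM⟩ := ((isCompact_closedBall p₀ δ).prod isCompact_uIcc).exists_bound_of_continuousOn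
    ((hF.continuousOn_fderiv_of_isOpen hW le_rfl).mono hK)
  have hcont : ∀ p ∈ Metric.closedBall p₀ δ, ContinuousOn (fun t => F (p, t)) (Set.uIcc a b) :=
    fun p hp => hF.continuousOn.comp (Continuous.continuousOn (by fun_prop))
      fun t ht => hK ⟨hp, ht⟩
  refine intervalIntegral.hasFDerivAt_integral_of_dominated_of_fderiv_le
    (F := fun p t => F (p, t))
    (F' := fun p t => (fderiv ℝ F (p, t)).comp (ContinuousLinearMap.inl ℝ P ℝ))
    (bound := fun _ => M * ‖ContinuousLinearMap.inl ℝ P ℝ‖) (Metric.closedBall_mem_nhds p₀ hδ) ?_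
    (hcont p₀ (Metric.mem_closedBall_self hδ.le)).intervalIntegrable ?_ ?_
    intervalIntegrable_const ?_
  · filter_upwards [Metric.closedBall_mem_nhds p₀ hδ] with p hp
    exact ((hcont p hp).mono Set.uIoc_subset_uIcc).aestronglyMeasurable measurableSet_uIoc
  · exact (hF.continuousOn_fderiv_comp_inl hW fun t ht => hp₀ t (Set.uIoc_subset_uIcc ht)
      ).aestronglyMeasurable measurableSet_uIoc
  · refine ae_of_all _ fun t ht p hp => ?_
    exact (ContinuousLinearMap.opNorm_comp_le _ _).trans <| by
      gcongr; exact hM (p, t) ⟨hp, Set.uIoc_subset_uIcc ht⟩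
  · refine ae_of_all _ fun t ht p hp => ?_
    have hpt : (p, t) ∈ W := hK ⟨hp, Set.uIoc_subset_uIcc ht⟩
    have hFp := (hF.contDiffAt (hW.mem_nhds hpt)).differentiableAt one_ne_zero
    exact hFp.hasFDerivAt.comp p (hasFDerivAt_prodMk_left p t)

theorem hasDerivAt_intervalIntegral_comp_of_contDiffOn [ProperSpace P] (hW : IsOpen W)
    (hF : ContDiffOn ℝ 1 F W) {σ : ℝ → P} {v : P} {s₀ : ℝ} (hσ : HasDerivAt σ v s₀)
    (hW₀ : ∀ t ∈ Set.uIcc a b, (σ s₀, t) ∈ W) {D : ℝ → E}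
    (hD : ∀ t ∈ Set.uIcc a b, HasDerivAt (fun r : ℝ => F (σ s₀ + r • v, t)) (D t) 0) :
    HasDerivAt (fun s => ∫ t in a..b, F (σ s, t)) (∫ t in a..b, D t) s₀ := by
  refine ((hasFDerivAt_intervalIntegral_of_contDiffOn hW hF hW₀).comp_hasDerivAt s₀ hσ
    ).congr_deriv ?_
  rw [ContinuousLinearMap.intervalIntegral_apply
    (hF.continuousOn_fderiv_comp_inl hW hW₀).intervalIntegrable]
  refine intervalIntegral.integral_congr fun t ht => ?_
  have hline : HasDerivAt (fun r : ℝ => (σ s₀ + r • v, t)) (v, 0) 0 := by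
    simpa using ((hasDerivAt_id (0 : ℝ)).smul_const v).const_add (σ s₀) |>.prodMk
      (hasDerivAt_const (0 : ℝ) t)
  have hFt := (hF.contDiffAt (hW.mem_nhds (hW₀ t ht))).differentiableAt one_ne_zero
  exact (hFt.hasFDerivAt.comp_hasDerivAt_of_eq 0 hline (by simp)).unique (hD t ht)

end ParametricIntegral

section GaussWeight

variable {F : Type*} [NormedAddCommGroup F] [InnerProductSpace ℝ F]

theorem HasDerivAt.norm {f : ℝ → F} {f' : F} {x : ℝ} (hf : HasDerivAt f f' x) (h0 : f x ≠ 0) :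
    HasDerivAt (fun s => ‖f s‖) (⟪f x, f'⟫ / ‖f x‖) x := by
  have h := hf.norm_sq.sqrt (by positivity)
  simp only [Real.sqrt_sq (norm_nonneg _)] at h
  convert h using 1
  ring

-- The exponent `-1/2` is the dimension of the curve, not that of `F`.
def gaussWeight (r : ℝ) (z : F) : ℝ := (4 * π * r) ^ (-(1 : ℝ) / 2) * exp (-‖z‖ ^ 2 / (4 * r))

theorem ContDiffAt.gaussWeight {E : Type*} [NormedAddCommGroup E] [NormedSpace ℝ E]
    {r : E → ℝ} {z : E → F} {x : E} {n : WithTop ℕ∞}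
    (hr : ContDiffAt ℝ n r x) (hz : ContDiffAt ℝ n z x) (hr0 : r x ≠ 0) :
    ContDiffAt ℝ n (fun y => gaussWeight (r y) (z y)) x := by
  have h4r : 4 * π * r x ≠ 0 := by positivity
  refine ((Real.contDiffAt_rpow_const_of_ne h4r).comp x (contDiffAt_const.mul hr)).mul ?_
  exact (hz.norm_sq ℝ).neg.div (contDiffAt_const.mul hr) (by positivity) |>.exp

theorem HasDerivAt.gaussWeight {r : ℝ → ℝ} {z : ℝ → F} {r' x : ℝ} {z' : F}
    (hr : HasDerivAt r r' x) (hz : HasDerivAt z z' x) (hr0 : r x ≠ 0) :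
    HasDerivAt (fun s => gaussWeight (r s) (z s))
      (gaussWeight (r x) (z x) *
        (r' * (‖z x‖ ^ 2 / (4 * r x ^ 2) - 1 / (2 * r x)) - ⟪z x, z'⟫ / (2 * r x))) x := by
  have h4r : 4 * π * r x ≠ 0 := by positivity
  have hpow := (hr.const_mul (4 * π)).rpow_const (p := -(1 : ℝ) / 2) (Or.inl h4r)
  have hexp := (hz.norm_sq.fun_neg.fun_div (hr.const_mul 4) (by positivity)).exp
  refine (hpow.mul hexp).congr_deriv ?_
  rw [Real.rpow_sub_one h4r]
  unfold _root_.gaussWeight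
  field_simp
  ring

end GaussWeight

def rotNegPiDivTwo : E2 →L[ℝ] E2 :=
  (EuclideanSpace.proj (1 : Fin 2)).smulRight (EuclideanSpace.single 0 1) -
    (EuclideanSpace.proj (0 : Fin 2)).smulRight (EuclideanSpace.single 1 1)

theorem normal_eq_rotNegPiDivTwo (γ : ℝ → E2) :
    normal γ = fun t => rotNegPiDivTwo (deriv γ t) := by
  ext t i
  fin_cases i <;> simp [normal, rotNegPiDivTwo]

theorem contDiff_normal {γ : ℝ → E2} {n : WithTop ℕ∞} (hγ : ContDiff ℝ (n + 1) γ) :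
    ContDiff ℝ n (normal γ) := by
  rw [normal_eq_rotNegPiDivTwo]
  exact rotNegPiDivTwo.contDiff.comp hγ.deriv'

theorem inner_rotNegPiDivTwo (a b : E2) : ⟪a, rotNegPiDivTwo b⟫ = a 0 * b 1 - a 1 * b 0 := by
  simp [rotNegPiDivTwo, PiLp.inner_apply, Fin.sum_univ_two, sub_eq_add_neg, mul_comm]

theorem inner_deriv_deriv_smul_normal {γ : ℝ → E2} {f : ℝ → ℝ} {t : ℝ}
    (hγ : DifferentiableAt ℝ (deriv γ) t) (hf : DifferentiableAt ℝ f t) :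
    ⟪deriv γ t, deriv (fun s => f s • normal γ s) t⟫ = f t * curv γ t := by
  have hn : HasDerivAt (normal γ) (rotNegPiDivTwo (deriv (deriv γ) t)) t := by
    rw [normal_eq_rotNegPiDivTwo]
    exact rotNegPiDivTwo.hasFDerivAt.comp_hasDerivAt t hγ.hasDerivAt
  rw [(hf.hasDerivAt.fun_smul hn).deriv, inner_add_right, real_inner_smul_right,
    real_inner_smul_right, curv, normal_eq_rotNegPiDivTwo, inner_rotNegPiDivTwo,
    inner_rotNegPiDivTwo, inner_rotNegPiDivTwo]
  ring

section Variation

variable {γ w : ℝ → E2}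

-- `q = ((s, a, r), t)`: variation parameter `s`, centre `a`, scale `r`, curve parameter `t`.
def variationIntegrand (γ w : ℝ → E2) (q : (ℝ × E2 × ℝ) × ℝ) : ℝ :=
  gaussWeight q.1.2.2 (γ q.2 + q.1.1 • w q.2 - q.1.2.1) * ‖deriv γ q.2 + q.1.1 • deriv w q.2‖

def variationDomain (γ w : ℝ → E2) : Set ((ℝ × E2 × ℝ) × ℝ) :=
  {q | q.1.2.2 ≠ 0 ∧ deriv γ q.2 + q.1.1 • deriv w q.2 ≠ 0}

theorem isOpen_variationDomain (hγ : Continuous (deriv γ)) (hw : Continuous (deriv w)) :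
    IsOpen (variationDomain γ w) :=
  (isOpen_ne_fun (by fun_prop) continuous_const).inter
    (isOpen_ne_fun (by fun_prop) continuous_const)

theorem contDiffOn_variationIntegrand (hγ : ContDiff ℝ 2 γ) (hw : ContDiff ℝ 2 w) :
    ContDiffOn ℝ 1 (variationIntegrand γ w) (variationDomain γ w) := by
  have hγ1 : ContDiff ℝ 1 γ := hγ.of_le one_le_two
  have hw1 : ContDiff ℝ 1 w := hw.of_le one_le_two
  have hγ' : ContDiff ℝ 1 (deriv γ) := hγ.deriv'
  have hw' : ContDiff ℝ 1 (deriv w) := hw.deriv'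
  intro q hq
  exact ((ContDiffAt.gaussWeight (r := fun q : (ℝ × E2 × ℝ) × ℝ => q.1.2.2)
    (z := fun q => γ q.2 + q.1.1 • w q.2 - q.1.2.1) (by fun_prop) (by fun_prop) hq.1).mul
    (ContDiffAt.norm ℝ (f := fun q : (ℝ × E2 × ℝ) × ℝ => deriv γ q.2 + q.1.1 • deriv w q.2)
      (by fun_prop) hq.2)).contDiffWithinAt

theorem hasDerivAt_variationIntegrand_line {t r₀ h : ℝ} {a y : E2} (hr₀ : r₀ ≠ 0)
    (hunit : ‖deriv γ t‖ = 1) :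
    HasDerivAt (fun r : ℝ => variationIntegrand γ w (((0 : ℝ), a, r₀) + r • ((1 : ℝ), y, h), t))
      (gaussWeight r₀ (γ t - a) * (⟪deriv γ t, deriv w t⟫
        + h * (‖γ t - a‖ ^ 2 / (4 * r₀ ^ 2) - 1 / (2 * r₀))
        - ⟪γ t - a, w t - y⟫ / (2 * r₀))) 0 := by
  have hline : (fun r : ℝ => variationIntegrand γ w (((0 : ℝ), a, r₀) + r • ((1 : ℝ), y, h), t)) =
      fun r => gaussWeight (r₀ + r * h) ((γ t - a) + r • (w t - y)) *
        ‖deriv γ t + r • deriv w t‖ := by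
    funext r
    simp only [variationIntegrand, Prod.fst_add, Prod.snd_add, Prod.smul_fst, Prod.smul_snd,
      smul_eq_mul, zero_add, mul_one, mul_comm r h]
    congr 2
    module
  have hgauss := HasDerivAt.gaussWeight (((hasDerivAt_id (0 : ℝ)).mul_const h).const_add r₀)
    (((hasDerivAt_id (0 : ℝ)).smul_const (w t - y)).const_add (γ t - a)) (by simpa using hr₀)
  have hspeed := (((hasDerivAt_id (0 : ℝ)).smul_const (deriv w t)).const_add (deriv γ t)).norm
    (by simp [← norm_pos_iff, hunit])
  rw [hline]
  refine (hgauss.mul hspeed).congr_deriv ?_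
  simp only [id, zero_mul, add_zero, zero_smul, one_smul, one_mul, hunit, div_one]
  ring

theorem integral_variationIntegrand_smul_normal {f : ℝ → ℝ} (hγ : Differentiable ℝ γ)
    (hw : Differentiable ℝ fun t => f t • normal γ t) (ℓ s r : ℝ) (a : E2) :
    ∫ t in (0:ℝ)..ℓ, variationIntegrand γ (fun t => f t • normal γ t) ((s, a, r), t) =
      (4 * π * r) ^ (-(1:ℝ)/2) * ∫ t in (0:ℝ)..ℓ,
        exp (-‖(γ t + (s * f t) • normal γ t) - a‖ ^ 2 / (4 * r)) *
          ‖deriv (fun t' => γ t' + (s * f t') • normal γ t') t‖ := by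
  rw [← intervalIntegral.integral_const_mul]
  refine intervalIntegral.integral_congr fun t _ => ?_
  have hvar : deriv (fun t' => γ t' + (s * f t') • normal γ t') t =
      deriv γ t + s • deriv (fun t => f t • normal γ t) t := by
    simp only [mul_smul]
    exact ((hγ t).hasDerivAt.add ((hw t).hasDerivAt.const_smul s)).deriv
  rw [hvar, mul_smul]
  exact mul_assoc _ _ _

end Variation

theorem stmt1_general (γ : ℝ → E2) (hγ : ContDiff ℝ (⊤ : ℕ∞) γ)
    (hunit : ∀ t, ‖deriv γ t‖ = 1)
    (ℓ : ℝ)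
    (f : ℝ → ℝ) (hf : ContDiff ℝ (⊤ : ℕ∞) f)
    (x : ℝ → E2) (τ : ℝ → ℝ)
    (x₀ : E2) (t₀ : ℝ) (ht₀ : 0 < t₀) (y : E2) (h : ℝ)
    (hx0 : x 0 = x₀) (hτ0 : τ 0 = t₀)
    (hx : HasDerivAt x y 0) (hτ : HasDerivAt τ h 0) :
    HasDerivAt
      (fun s : ℝ => (4 * π * τ s) ^ (-(1:ℝ)/2) *
        ∫ t in (0:ℝ)..ℓ,
          Real.exp (-‖(γ t + (s * f t) • normal γ t) - x s‖ ^ 2 / (4 * τ s)) *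
            ‖deriv (fun t' => γ t' + (s * f t') • normal γ t') t‖)
      ((4 * π * t₀) ^ (-(1:ℝ)/2) *
        ∫ t in (0:ℝ)..ℓ,
          (f t * (curv γ t - ⟪γ t - x₀, normal γ t⟫ / (2 * t₀))
            + h * (‖γ t - x₀‖ ^ 2 / (4 * t₀ ^ 2) - 1 / (2 * t₀))
            + ⟪γ t - x₀, y⟫ / (2 * t₀)) * Real.exp (-‖γ t - x₀‖ ^ 2 / (4 * t₀)))
      0 := by
  subst hx0 hτ0
  have hγ2 : ContDiff ℝ 2 γ := hγ.of_le (WithTop.coe_le_coe.mpr le_top)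
  have hw : ContDiff ℝ 2 fun t => f t • normal γ t :=
    (hf.of_le (WithTop.coe_le_coe.mpr le_top)).smul
      (contDiff_normal (hγ.of_le (WithTop.coe_le_coe.mpr le_top)))
  have hσ : HasDerivAt (fun s : ℝ => (s, x s, τ s)) ((1 : ℝ), y, h) 0 :=
    (hasDerivAt_id 0).prodMk (hx.prodMk hτ)
  simp only [← integral_variationIntegrand_smul_normal (hγ2.differentiable two_ne_zero)
    (hw.differentiable two_ne_zero), ← intervalIntegral.integral_const_mul]
  refine hasDerivAt_intervalIntegral_comp_of_contDiffOn
    (isOpen_variationDomain (hγ2.continuous_deriv one_le_two) (hw.continuous_deriv one_le_two))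
    (contDiffOn_variationIntegrand hγ2 hw) hσ
    (fun t _ => ⟨ht₀.ne', by simp [← norm_pos_iff, hunit]⟩) fun t _ => ?_
  refine (hasDerivAt_variationIntegrand_line ht₀.ne' (hunit t)).congr_deriv ?_
  rw [inner_deriv_deriv_smul_normal ((hγ2.deriv' (n := 1)).differentiable one_ne_zero t)
    (hf.differentiable (by simp) t), inner_sub_right, real_inner_smul_right, gaussWeight]
  ring

/-- First variation formula for the Gaussian weighted length functional
`F_{x₀,t₀}` under simultaneous variation of a smooth closed unit-speed curve, the center,
and the scale. -/
theorem stmt1 (γ : ℝ → E2) (hγ : ContDiff ℝ (⊤ : ℕ∞) γ)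
    (hunit : ∀ t, ‖deriv γ t‖ = 1)
    (ℓ : ℝ) (hℓ : 0 < ℓ) (hper : ∀ t, γ (t + ℓ) = γ t)
    (f : ℝ → ℝ) (hf : ContDiff ℝ (⊤ : ℕ∞) f) (hfper : ∀ t, f (t + ℓ) = f t)
    (ε : ℝ) (hε : 0 < ε)
    (x : ℝ → E2) (τ : ℝ → ℝ)
    (x₀ : E2) (t₀ : ℝ) (ht₀ : 0 < t₀) (y : E2) (h : ℝ)
    (hx0 : x 0 = x₀) (hτ0 : τ 0 = t₀)
    (hτpos : ∀ s ∈ Set.Ioo (-ε) ε, 0 < τ s)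
    (hx : HasDerivAt x y 0) (hτ : HasDerivAt τ h 0) :
    HasDerivAt
      (fun s : ℝ => (4 * π * τ s) ^ (-(1:ℝ)/2) *
        ∫ t in (0:ℝ)..ℓ,
          Real.exp (-‖(γ t + (s * f t) • normal γ t) - x s‖ ^ 2 / (4 * τ s)) *
            ‖deriv (fun t' => γ t' + (s * f t') • normal γ t') t‖)
      ((4 * π * t₀) ^ (-(1:ℝ)/2) *
        ∫ t in (0:ℝ)..ℓ,
          (f t * (curv γ t - ⟪γ t - x₀, normal γ t⟫ / (2 * t₀))
            + h * (‖γ t - x₀‖ ^ 2 / (4 * t₀ ^ 2) - 1 / (2 * t₀))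
            + ⟪γ t - x₀, y⟫ / (2 * t₀)) * Real.exp (-‖γ t - x₀‖ ^ 2 / (4 * t₀)))
      0 :=
  stmt1_general γ hγ hunit ℓ f hf x τ x₀ t₀ ht₀ y h hx0 hτ0 hx hτ
end
end

section
/- Let γ : ℝ → ℝ² be a smooth closed unit-speed self-shrinking curve with period ℓ. Then: (i) ∫₀^ℓ (|γ(t)|² − 2) e^{−|γ(t)|²/4} dt = 0; (ii) ∫₀^ℓ γ(t) e^{−|γ(t)|²/4} dt = 0 and ∫₀^ℓ γ(t)|γ(t)|² e^{−|γ(t)|²/4} dt = 0 (as identities in ℝ²); (iii) ∫₀^ℓ ( |γ(t)|⁴ − 12 + 16·H(t)² ) e^{−|γ(t)|²/4} dt = 0; and (iv) for every w ∈ ℝ², ∫₀^ℓ ⟨γ(t), w⟩² e^{−|γ(t)|²/4} dt = 2 ∫₀^ℓ ⟨γ′(t), w⟩² e^{−|γ(t)|²/4} dt. -/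
/-!
Write `ρ = exp (-‖γ‖² / 4)`. For a unit-speed curve the shrinker equation reads
`γ'' = -γ^⊥ / 2`, which gives `(ρ γ')' = -ρ γ / 2` and `⟪γ, γ'⟫' = 1 - ‖γ^⊥‖² / 2`.
Hence each integrand is the derivative of an explicit function of `γ` and `γ'`
(`-2 ⟪γ, γ'⟫ ρ`, `-2 ρ γ'`, ...), which takes the same value at `0` and `ℓ`.
-/

noncomputable section
open Real MeasureTheory
open scoped RealInnerProductSpace

theorem intervalIntegral.integral_eq_zero_of_hasDerivAt_of_eq {F : Type*}
    [NormedAddCommGroup F] [NormedSpace ℝ F] [CompleteSpace F] {f f' : ℝ → F} {ℓ : ℝ}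
    (hf : ∀ t, HasDerivAt f (f' t) t) (hf' : Continuous f') (hℓ : f ℓ = f 0) :
    ∫ t in (0 : ℝ)..ℓ, f' t = 0 := by
  rw [intervalIntegral.integral_eq_sub_of_hasDerivAt (fun t _ => hf t)
    (hf'.intervalIntegrable 0 ℓ), hℓ, sub_self]

theorem HasDerivAt.exp_neg_norm_sq_div_four {E : Type*} [NormedAddCommGroup E]
    [InnerProductSpace ℝ E] {γ : ℝ → E} {v : E} {t : ℝ} (h : HasDerivAt γ v t) :
    HasDerivAt (fun t => Real.exp (-‖γ t‖ ^ 2 / 4))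
      (-(⟪γ t, v⟫ / 2) * Real.exp (-‖γ t‖ ^ 2 / 4)) t :=
  (h.norm_sq.neg.div_const 4).exp.congr_deriv (by simp only [Pi.neg_apply]; ring)

/-- The self-shrinker equation `γ'' = -γ^⊥ / 2` of a unit-speed curve with velocity `v`,
in any codimension. -/
structure IsUnitSpeedShrinker {E : Type*} [NormedAddCommGroup E] [InnerProductSpace ℝ E]
    (γ v : ℝ → E) : Prop where
  hasDerivAt : ∀ t, HasDerivAt γ (v t) t
  hasDerivAt_velocity : ∀ t, HasDerivAt v ((2⁻¹ : ℝ) • (⟪γ t, v t⟫ • v t - γ t)) t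
  norm_velocity : ∀ t, ‖v t‖ = 1

namespace IsUnitSpeedShrinker

variable {E : Type*} [NormedAddCommGroup E] [InnerProductSpace ℝ E] {γ v : ℝ → E}

theorem continuous (h : IsUnitSpeedShrinker γ v) : Continuous γ :=
  continuous_iff_continuousAt.2 fun t => (h.hasDerivAt t).continuousAt

theorem continuous_velocity (h : IsUnitSpeedShrinker γ v) : Continuous v :=
  continuous_iff_continuousAt.2 fun t => (h.hasDerivAt_velocity t).continuousAt

theorem hasDerivAt_inner (h : IsUnitSpeedShrinker γ v) (t : ℝ) :
    HasDerivAt (fun t => ⟪γ t, v t⟫) (1 - (‖γ t‖ ^ 2 - ⟪γ t, v t⟫ ^ 2) / 2) t := by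
  refine ((h.hasDerivAt t).inner ℝ (h.hasDerivAt_velocity t)).congr_deriv ?_
  rw [inner_smul_right, inner_sub_right, inner_smul_right, real_inner_self_eq_norm_sq,
    real_inner_self_eq_norm_sq, h.norm_velocity]
  ring

theorem hasDerivAt_exp_smul_velocity (h : IsUnitSpeedShrinker γ v) (t : ℝ) :
    HasDerivAt (fun t => exp (-‖γ t‖ ^ 2 / 4) • v t)
      ((-(2⁻¹ : ℝ) * exp (-‖γ t‖ ^ 2 / 4)) • γ t) t := by
  refine ((h.hasDerivAt t).exp_neg_norm_sq_div_four.smul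
    (h.hasDerivAt_velocity t)).congr_deriv ?_
  module

variable {ℓ : ℝ}

theorem integral_norm_sq_sub_two_mul_exp (h : IsUnitSpeedShrinker γ v) (hγℓ : γ ℓ = γ 0)
    (hvℓ : v ℓ = v 0) :
    ∫ t in (0 : ℝ)..ℓ, (‖γ t‖ ^ 2 - 2) * exp (-‖γ t‖ ^ 2 / 4) = 0 := by
  have := h.continuous; have := h.continuous_velocity
  refine intervalIntegral.integral_eq_zero_of_hasDerivAt_of_eq
    (f := fun t => -2 * (⟪γ t, v t⟫ * exp (-‖γ t‖ ^ 2 / 4))) (fun t => ?_) (by fun_prop)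
    (by simp only [hγℓ, hvℓ])
  refine (((h.hasDerivAt_inner t).mul
    (h.hasDerivAt t).exp_neg_norm_sq_div_four).const_mul (-2)).congr_deriv ?_
  ring

theorem integral_exp_smul (h : IsUnitSpeedShrinker γ v) [CompleteSpace E] (hγℓ : γ ℓ = γ 0)
    (hvℓ : v ℓ = v 0) :
    ∫ t in (0 : ℝ)..ℓ, exp (-‖γ t‖ ^ 2 / 4) • γ t = 0 := by
  have := h.continuous
  refine intervalIntegral.integral_eq_zero_of_hasDerivAt_of_eq
    (f := fun t => (-2 : ℝ) • (exp (-‖γ t‖ ^ 2 / 4) • v t)) (fun t => ?_) (by fun_prop)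
    (by simp only [hγℓ, hvℓ])
  refine ((h.hasDerivAt_exp_smul_velocity t).const_smul (-2 : ℝ)).congr_deriv ?_
  module

theorem integral_norm_sq_mul_exp_smul (h : IsUnitSpeedShrinker γ v) [CompleteSpace E]
    (hγℓ : γ ℓ = γ 0) (hvℓ : v ℓ = v 0) :
    ∫ t in (0 : ℝ)..ℓ, (‖γ t‖ ^ 2 * exp (-‖γ t‖ ^ 2 / 4)) • γ t = 0 := by
  have := h.continuous; have := h.continuous_velocity
  refine intervalIntegral.integral_eq_zero_of_hasDerivAt_of_eq
    (f := fun t => (2 * (‖γ t‖ ^ 2 - 4)) • (exp (-‖γ t‖ ^ 2 / 4) • v t)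
      - (4 * ⟪γ t, v t⟫ * exp (-‖γ t‖ ^ 2 / 4)) • γ t) (fun t => ?_) (by fun_prop)
    (by simp only [hγℓ, hvℓ])
  have hr := (h.hasDerivAt t).norm_sq
  have hs := h.hasDerivAt_inner t
  have hρ := (h.hasDerivAt t).exp_neg_norm_sq_div_four
  refine ((((hr.sub_const 4).const_mul 2).smul (h.hasDerivAt_exp_smul_velocity t)).sub
    (((hs.const_mul 4).mul hρ).smul (h.hasDerivAt t))).congr_deriv ?_
  simp only [Pi.mul_apply]
  module

/-- Here `‖γ‖² - ⟪γ, v⟫² = ‖γ^⊥‖² = 4 ‖γ''‖²`, so the last term is `16 H²`. -/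
theorem integral_norm_pow_four_sub_twelve_mul_exp (h : IsUnitSpeedShrinker γ v)
    (hγℓ : γ ℓ = γ 0) (hvℓ : v ℓ = v 0) :
    ∫ t in (0 : ℝ)..ℓ, (‖γ t‖ ^ 4 - 12 + 4 * (‖γ t‖ ^ 2 - ⟪γ t, v t⟫ ^ 2)) *
      exp (-‖γ t‖ ^ 2 / 4) = 0 := by
  have := h.continuous; have := h.continuous_velocity
  refine intervalIntegral.integral_eq_zero_of_hasDerivAt_of_eq
    (f := fun t => -2 * ((‖γ t‖ ^ 2 + 6) * ⟪γ t, v t⟫ * exp (-‖γ t‖ ^ 2 / 4)))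
    (fun t => ?_) (by fun_prop) (by simp only [hγℓ, hvℓ])
  refine (((((h.hasDerivAt t).norm_sq.add_const 6).mul (h.hasDerivAt_inner t)).mul
    (h.hasDerivAt t).exp_neg_norm_sq_div_four).const_mul (-2)).congr_deriv ?_
  simp only [Pi.mul_apply]
  ring

theorem integral_inner_sq_mul_exp (h : IsUnitSpeedShrinker γ v) (hγℓ : γ ℓ = γ 0)
    (hvℓ : v ℓ = v 0) (w : E) :
    ∫ t in (0 : ℝ)..ℓ, ⟪γ t, w⟫ ^ 2 * exp (-‖γ t‖ ^ 2 / 4)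
      = 2 * ∫ t in (0 : ℝ)..ℓ, ⟪v t, w⟫ ^ 2 * exp (-‖γ t‖ ^ 2 / 4) := by
  have := h.continuous; have := h.continuous_velocity
  have hdiff : ∫ t in (0 : ℝ)..ℓ, (⟪γ t, w⟫ ^ 2 * exp (-‖γ t‖ ^ 2 / 4)
      - 2 * (⟪v t, w⟫ ^ 2 * exp (-‖γ t‖ ^ 2 / 4))) = 0 := by
    refine intervalIntegral.integral_eq_zero_of_hasDerivAt_of_eq
      (f := fun t => -2 * (⟪γ t, w⟫ * ⟪exp (-‖γ t‖ ^ 2 / 4) • v t, w⟫))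
      (fun t => ?_) (by fun_prop) (by simp only [hγℓ, hvℓ])
    refine ((((h.hasDerivAt t).inner ℝ (hasDerivAt_const t w)).mul
      ((h.hasDerivAt_exp_smul_velocity t).inner ℝ (hasDerivAt_const t w))).const_mul
        (-2)).congr_deriv ?_
    simp only [inner_zero_right, zero_add, real_inner_smul_left]
    ring
  rw [intervalIntegral.integral_sub ((by fun_prop : Continuous _).intervalIntegrable _ _)
    ((by fun_prop : Continuous _).intervalIntegrable _ _),
    intervalIntegral.integral_const_mul, sub_eq_zero] at hdiff
  exact hdiff

end IsUnitSpeedShrinker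

theorem HasDerivAt.inner_eq_zero_of_norm_eq_one {E : Type*} [NormedAddCommGroup E]
    [InnerProductSpace ℝ E] {v : ℝ → E} {a : E} {t : ℝ} (h : HasDerivAt v a t)
    (hv : ∀ s, ‖v s‖ = 1) : ⟪v t, a⟫ = 0 := by
  have hconst : HasDerivAt (‖v ·‖ ^ 2) 0 t := by
    simpa only [hv, one_pow] using hasDerivAt_const t (1 : ℝ)
  simpa using h.norm_sq.unique hconst

theorem EuclideanSpace.eq_inner_smul_add_inner_rot_smul_rot {v : E2} (hv : ‖v‖ = 1) (x : E2) :
    x = ⟪x, v⟫ • v + ⟪x, WithLp.toLp 2 ![v 1, -v 0]⟫ • WithLp.toLp 2 ![v 1, -v 0] := by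
  have hv2 : v 0 ^ 2 + v 1 ^ 2 = 1 := by
    simpa [hv, Fin.sum_univ_two, eq_comm] using EuclideanSpace.norm_sq_eq v
  ext i
  fin_cases i <;>
    simp only [Fin.zero_eta, Fin.mk_one, Fin.isValue, PiLp.inner_apply, RCLike.inner_apply,
      conj_trivial, Fin.sum_univ_two, Matrix.cons_val_zero, Matrix.cons_val_one,
      PiLp.add_apply, PiLp.smul_apply, smul_eq_mul] <;>
    linear_combination (-x _) * hv2

theorem EuclideanSpace.norm_sq_eq_inner_sq_add_inner_rot_sq {v : E2} (hv : ‖v‖ = 1) (x : E2) :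
    ‖x‖ ^ 2 = ⟪x, v⟫ ^ 2 + ⟪x, WithLp.toLp 2 ![v 1, -v 0]⟫ ^ 2 := by
  rw [← real_inner_self_eq_norm_sq]
  nth_rw 2 [EuclideanSpace.eq_inner_smul_add_inner_rot_smul_rot hv x]
  rw [inner_add_right, inner_smul_right, inner_smul_right]
  ring

theorem isUnitSpeedShrinker_of_curv_eq {γ : ℝ → E2} (hγ : ContDiff ℝ 2 γ)
    (hunit : ∀ t, ‖deriv γ t‖ = 1) (hshrink : ∀ t, curv γ t = ⟪γ t, normal γ t⟫ / 2) :
    IsUnitSpeedShrinker γ (deriv γ) := by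
  obtain ⟨hd, -, hd'⟩ := (contDiff_succ_iff_deriv (n := 1)).mp hγ
  refine ⟨fun t => (hd t).hasDerivAt, fun t => ?_, hunit⟩
  have hγ'' := (hd'.differentiable one_ne_zero t).hasDerivAt
  have horth : ⟪deriv (deriv γ) t, deriv γ t⟫ = 0 := by
    rw [real_inner_comm]
    exact hγ''.inner_eq_zero_of_norm_eq_one hunit
  have hcurv : ⟪deriv (deriv γ) t, normal γ t⟫ = -(⟪γ t, normal γ t⟫ / 2) := by
    rw [← hshrink, curv, neg_neg]
  have ha := EuclideanSpace.eq_inner_smul_add_inner_rot_smul_rot (hunit t) (deriv (deriv γ) t)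
  have hx := EuclideanSpace.eq_inner_smul_add_inner_rot_smul_rot (hunit t) (γ t)
  rw [← normal, horth, hcurv] at ha
  rw [← normal] at hx
  refine hγ''.congr_deriv ?_
  linear_combination (norm := module) ha + (2⁻¹ : ℝ) • hx

theorem stmt5_general (γ : ℝ → E2) (hγ : ContDiff ℝ (⊤ : ℕ∞) γ)
    (hunit : ∀ t, ‖deriv γ t‖ = 1)
    (ℓ : ℝ) (hper : ∀ t, γ (t + ℓ) = γ t)
    (hshrink : ∀ t, curv γ t = ⟪γ t, normal γ t⟫ / 2) :
    (∫ t in (0:ℝ)..ℓ, (‖γ t‖ ^ 2 - 2) * Real.exp (-‖γ t‖ ^ 2 / 4) = 0) ∧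
    ((∫ t in (0:ℝ)..ℓ, Real.exp (-‖γ t‖ ^ 2 / 4) • γ t) = (0 : E2)) ∧
    ((∫ t in (0:ℝ)..ℓ, (‖γ t‖ ^ 2 * Real.exp (-‖γ t‖ ^ 2 / 4)) • γ t) = (0 : E2)) ∧
    (∫ t in (0:ℝ)..ℓ, (‖γ t‖ ^ 4 - 12 + 16 * curv γ t ^ 2) * Real.exp (-‖γ t‖ ^ 2 / 4) = 0) ∧
    (∀ w : E2,
      ∫ t in (0:ℝ)..ℓ, ⟪γ t, w⟫ ^ 2 * Real.exp (-‖γ t‖ ^ 2 / 4)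
        = 2 * ∫ t in (0:ℝ)..ℓ, ⟪deriv γ t, w⟫ ^ 2 * Real.exp (-‖γ t‖ ^ 2 / 4)) := by
  have h := isUnitSpeedShrinker_of_curv_eq (hγ.of_le (by norm_cast)) hunit hshrink
  have hγℓ : γ ℓ = γ 0 := by simpa using hper 0
  have hvℓ : deriv γ ℓ = deriv γ 0 := by
    simpa [funext hper] using (deriv_comp_add_const γ ℓ 0).symm
  have hcurv_sq (t : ℝ) : 16 * curv γ t ^ 2 = 4 * (‖γ t‖ ^ 2 - ⟪γ t, deriv γ t⟫ ^ 2) := by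
    rw [hshrink, EuclideanSpace.norm_sq_eq_inner_sq_add_inner_rot_sq (hunit t), normal]
    ring
  refine ⟨h.integral_norm_sq_sub_two_mul_exp hγℓ hvℓ, h.integral_exp_smul hγℓ hvℓ,
    h.integral_norm_sq_mul_exp_smul hγℓ hvℓ, ?_, h.integral_inner_sq_mul_exp hγℓ hvℓ⟩
  simpa only [hcurv_sq] using h.integral_norm_pow_four_sub_twelve_mul_exp hγℓ hvℓ

/-- Weighted integral identities on a smooth closed unit-speed
self-shrinking curve in the plane. -/
theorem stmt5 (γ : ℝ → E2) (hγ : ContDiff ℝ (⊤ : ℕ∞) γ)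
    (hunit : ∀ t, ‖deriv γ t‖ = 1)
    (ℓ : ℝ) (hℓ : 0 < ℓ) (hper : ∀ t, γ (t + ℓ) = γ t)
    (hshrink : ∀ t, curv γ t = ⟪γ t, normal γ t⟫ / 2) :
    (∫ t in (0:ℝ)..ℓ, (‖γ t‖ ^ 2 - 2) * Real.exp (-‖γ t‖ ^ 2 / 4) = 0) ∧
    ((∫ t in (0:ℝ)..ℓ, Real.exp (-‖γ t‖ ^ 2 / 4) • γ t) = (0 : E2)) ∧
    ((∫ t in (0:ℝ)..ℓ, (‖γ t‖ ^ 2 * Real.exp (-‖γ t‖ ^ 2 / 4)) • γ t) = (0 : E2)) ∧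
    (∫ t in (0:ℝ)..ℓ, (‖γ t‖ ^ 4 - 12 + 16 * curv γ t ^ 2) * Real.exp (-‖γ t‖ ^ 2 / 4) = 0) ∧
    (∀ w : E2,
      ∫ t in (0:ℝ)..ℓ, ⟪γ t, w⟫ ^ 2 * Real.exp (-‖γ t‖ ^ 2 / 4)
        = 2 * ∫ t in (0:ℝ)..ℓ, ⟪deriv γ t, w⟫ ^ 2 * Real.exp (-‖γ t‖ ^ 2 / 4)) :=
  stmt5_general γ hγ hunit ℓ hper hshrink
end
end

section
/- Let γ : ℝ → ℝ² be a smooth closed unit-speed self-shrinking curve with period ℓ. Then ∫₀^ℓ [ ( |γ(t)|²/4 − 1/2 )² − 1/2 ] e^{−|γ(t)|²/4} dt = − ∫₀^ℓ H(t)² e^{−|γ(t)|²/4} dt. -/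
noncomputable section
open Real MeasureTheory
open scoped RealInnerProductSpace

/-!
Put `u = |γ|²/4 − 1/2` and `e = exp (−|γ|²/4)`. Along a unit-speed curve `u′ = ⟨γ, γ′⟩/2` and
`e′ = −u′e`. Since `(γ′, n)` is an orthonormal frame and `⟨γ, n⟩ = 2H`, the self-shrinker
equation gives `⟨γ, γ″⟩ = −2H²` and `|γ|² = ⟨γ, γ′⟩² + 4H²`; hence `(u′e)′ = −ue` and
`(uu′e)′ = (u′² − u²)e`. Combining these, `(−(u + 1)u′e)′ = (u² − 1/2 + H²)e`, the derivative of
a periodic function, whose integral over a period vanishes.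
-/

theorem Function.Periodic.deriv {F : Type*} [NormedAddCommGroup F] [NormedSpace ℝ F]
    {f : ℝ → F} {c : ℝ} (h : Function.Periodic f c) : Function.Periodic (deriv f) c :=
  fun x => by rw [← deriv_comp_add_const, h.funext]

section UnitSpeed

variable {γ : ℝ → E2} {t : ℝ}

theorem inner_eq_inner_deriv_mul_add_inner_normal_mul (hunit : ‖deriv γ t‖ = 1) (x y : E2) :
    ⟪x, y⟫ = ⟪x, deriv γ t⟫ * ⟪y, deriv γ t⟫ + ⟪x, normal γ t⟫ * ⟪y, normal γ t⟫ := by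
  have h := congrArg (· ^ 2) hunit
  simp only [EuclideanSpace.norm_sq_eq, Real.norm_eq_abs, sq_abs, Fin.sum_univ_two] at h
  simp only [normal, PiLp.inner_apply, Fin.sum_univ_two, RCLike.inner_apply, conj_trivial,
    Matrix.cons_val_zero, Matrix.cons_val_one]
  linear_combination (-(x 0 * y 0 + x 1 * y 1)) * h

theorem inner_deriv_deriv_deriv_eq_zero (hunit : ∀ s, ‖deriv γ s‖ = 1)
    (hd : DifferentiableAt ℝ (deriv γ) t) : ⟪deriv γ t, deriv (deriv γ) t⟫ = 0 := by
  have h := hd.hasDerivAt.norm_sq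
  simp only [hunit, one_pow] at h
  simpa using h.unique (hasDerivAt_const t 1)

theorem continuous_curv (hγ : ContDiff ℝ 2 γ) : Continuous (curv γ) := by
  have h1 : ContDiff ℝ 1 (deriv γ) := (contDiff_succ_iff_deriv.mp hγ).2.2
  have h2 := h1.continuous_deriv le_rfl
  have h0 := h1.continuous
  unfold curv normal
  fun_prop

theorem norm_sq_eq_inner_deriv_sq_add_four_mul_curv_sq (hunit : ‖deriv γ t‖ = 1)
    (hshrink : curv γ t = ⟪γ t, normal γ t⟫ / 2) :
    ‖γ t‖ ^ 2 = ⟪γ t, deriv γ t⟫ ^ 2 + 4 * curv γ t ^ 2 := by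
  rw [← real_inner_self_eq_norm_sq, inner_eq_inner_deriv_mul_add_inner_normal_mul hunit, hshrink]
  ring

theorem inner_deriv_deriv_eq_neg_two_mul_curv_sq (hunit : ∀ s, ‖deriv γ s‖ = 1)
    (hd : DifferentiableAt ℝ (deriv γ) t) (hshrink : curv γ t = ⟪γ t, normal γ t⟫ / 2) :
    ⟪γ t, deriv (deriv γ) t⟫ = -2 * curv γ t ^ 2 := by
  rw [inner_eq_inner_deriv_mul_add_inner_normal_mul (hunit t),
    real_inner_comm (deriv γ t) (deriv (deriv γ) t),
    inner_deriv_deriv_deriv_eq_zero hunit hd]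
  have hH : ⟪deriv (deriv γ) t, normal γ t⟫ = -curv γ t := by rw [curv, neg_neg]
  rw [hH, show ⟪γ t, normal γ t⟫ = 2 * curv γ t by linarith]
  ring

end UnitSpeed

/-- `−(u + 1) u′ e` in the notation above. -/
def shrinkerPrimitive (γ : ℝ → E2) (t : ℝ) : ℝ :=
  -(‖γ t‖ ^ 2 / 4 + 1 / 2) * (⟪γ t, deriv γ t⟫ / 2) * exp (-‖γ t‖ ^ 2 / 4)

theorem Function.Periodic.shrinkerPrimitive {γ : ℝ → E2} {ℓ : ℝ} (h : Function.Periodic γ ℓ) :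
    Function.Periodic (shrinkerPrimitive γ) ℓ := fun t => by
  simp only [_root_.shrinkerPrimitive, h t, h.deriv t]

theorem hasDerivAt_shrinkerPrimitive {γ : ℝ → E2} {t : ℝ} (hγ : ContDiff ℝ 2 γ)
    (hunit : ∀ s, ‖deriv γ s‖ = 1) (hshrink : curv γ t = ⟪γ t, normal γ t⟫ / 2) :
    HasDerivAt (shrinkerPrimitive γ)
      (((‖γ t‖ ^ 2 / 4 - 1 / 2) ^ 2 - 1 / 2) * exp (-‖γ t‖ ^ 2 / 4)
        + curv γ t ^ 2 * exp (-‖γ t‖ ^ 2 / 4)) t := by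
  have hd := hγ.differentiable_deriv_two t
  have h1 : HasDerivAt γ (deriv γ t) t := (hγ.differentiable two_ne_zero t).hasDerivAt
  have hq : HasDerivAt (‖γ ·‖ ^ 2) (2 * ⟪γ t, deriv γ t⟫) t := h1.norm_sq
  have ha : HasDerivAt (fun s => ⟪γ s, deriv γ s⟫) (⟪γ t, deriv (deriv γ) t⟫ + 1) t := by
    simpa [real_inner_self_eq_norm_sq, hunit] using h1.inner ℝ hd.hasDerivAt
  have he := ((hq.neg).div_const 4).exp
  refine ((((hq.div_const 4).add_const (1 / 2)).neg.mul (ha.div_const 2)).mul he).congr_deriv ?_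
  simp only [Pi.neg_apply, Pi.mul_apply]
  generalize exp (-‖γ t‖ ^ 2 / 4) = e
  rw [inner_deriv_deriv_eq_neg_two_mul_curv_sq hunit hd hshrink,
    norm_sq_eq_inner_deriv_sq_add_four_mul_curv_sq (hunit t) hshrink]
  ring

theorem stmt6_general (γ : ℝ → E2) (hγ : ContDiff ℝ (⊤ : ℕ∞) γ)
    (hunit : ∀ t, ‖deriv γ t‖ = 1)
    (ℓ : ℝ) (hper : ∀ t, γ (t + ℓ) = γ t)
    (hshrink : ∀ t, curv γ t = ⟪γ t, normal γ t⟫ / 2) :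
    ∫ t in (0:ℝ)..ℓ, ((‖γ t‖ ^ 2 / 4 - 1/2) ^ 2 - 1/2) * Real.exp (-‖γ t‖ ^ 2 / 4)
      = -∫ t in (0:ℝ)..ℓ, curv γ t ^ 2 * Real.exp (-‖γ t‖ ^ 2 / 4) := by
  have hγ2 : ContDiff ℝ 2 γ := hγ.of_le (by norm_cast)
  have hcont : Continuous γ := hγ2.continuous
  have hL : Continuous fun t => ((‖γ t‖ ^ 2 / 4 - 1/2) ^ 2 - 1/2) * exp (-‖γ t‖ ^ 2 / 4) := by
    fun_prop
  have hR : Continuous fun t => curv γ t ^ 2 * exp (-‖γ t‖ ^ 2 / 4) := by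
    have := continuous_curv hγ2
    fun_prop
  have hFTC := intervalIntegral.integral_eq_sub_of_hasDerivAt
    (fun t _ => hasDerivAt_shrinkerPrimitive hγ2 hunit (hshrink t))
    ((hL.add hR).intervalIntegrable 0 ℓ)
  rw [intervalIntegral.integral_add (hL.intervalIntegrable 0 ℓ) (hR.intervalIntegrable 0 ℓ),
    (Function.Periodic.shrinkerPrimitive hper).eq, sub_self] at hFTC
  linarith

/-- On a smooth closed unit-speed self-shrinking curve,
`∫₀^ℓ [(|γ|²/4 − 1/2)² − 1/2] e^{−|γ|²/4} = −∫₀^ℓ H² e^{−|γ|²/4}`. -/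
theorem stmt6 (γ : ℝ → E2) (hγ : ContDiff ℝ (⊤ : ℕ∞) γ)
    (hunit : ∀ t, ‖deriv γ t‖ = 1)
    (ℓ : ℝ) (hℓ : 0 < ℓ) (hper : ∀ t, γ (t + ℓ) = γ t)
    (hshrink : ∀ t, curv γ t = ⟪γ t, normal γ t⟫ / 2) :
    ∫ t in (0:ℝ)..ℓ, ((‖γ t‖ ^ 2 / 4 - 1/2) ^ 2 - 1/2) * Real.exp (-‖γ t‖ ^ 2 / 4)
      = -∫ t in (0:ℝ)..ℓ, curv γ t ^ 2 * Real.exp (-‖γ t‖ ^ 2 / 4) :=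
  stmt6_general γ hγ hunit ℓ hper hshrink
end
end
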